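/- arXiv:2211.07949 — 2 statements merged into one kernel-verified Lean document; each statement's English description precedes it below -/
import Mathlib

section
/- Let T ≥ 1, W ⪰ 0 an n×n real symmetric matrix with PSD square root W̃, S ⪰ 0 singular, and let {n_j}_{j=1}^m be an orthonormal basis of the null space of S. Then every feasible sequence X₁,…,X_T (X_t ⪰ 0, X₁ + S ≻ 0) satisfies J_T ≥ 2√T · ∑_{j=1}^m n_jᵀ W̃ n_j, where J_T = ∑_{t=1}^T [tr(W X̄_t⁻¹) + tr(X_t)] with X̄_t = ∑_{k=1}^t X_k + tS. -/
open Matrix BigOperators Finset Real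

/-! Weak duality: for `Y ≻ 0` and every `Q`, `tr (Bᴴ Y⁻¹ B) ≥ 2 tr (Bᴴ Q) - tr (Qᴴ Y Q)`, because
`(Y⁻¹ B - Q)ᴴ Y (Y⁻¹ B - Q) ⪰ 0`. Take `Q = T^(-1/2) P` with `P = ∑ nⱼ nⱼᵀ` the orthogonal
projection onto `ker S`. As `S P = 0`, `tr (X̄ₜ P) = ∑_{k ≤ t} tr (Xₖ P) ≤ ∑_{k ≤ T} tr Xₖ`, so each
of the `T` terms `tr (W X̄ₜ⁻¹)` is at least `2 T^(-1/2) tr (W̃ P) - T⁻¹ ∑_k tr Xₖ`; summing over `t`,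
the subtracted traces are paid for by the terms `tr Xₜ`. -/

namespace Matrix

variable {ι κ : Type*}

lemma posDef_sum_of_mem {R : Type*} [Ring R] [PartialOrder R] [StarRing R] [AddLeftMono R]
    [DecidableEq κ] {s : Finset κ} {A : κ → Matrix ι ι R} {i : κ} (hi : i ∈ s)
    (hAi : (A i).PosDef) (hA : ∀ j ∈ s, (A j).PosSemidef) : (∑ j ∈ s, A j).PosDef := by
  rw [← Finset.add_sum_erase s A hi]
  exact hAi.add_posSemidef <| posSemidef_sum _ fun j hj => hA j (Finset.mem_of_mem_erase hj)

lemma posDef_sum_Icc_add_natCast_smul {X : ℕ → Matrix ι ι ℝ} {S : Matrix ι ι ℝ} {t : ℕ} (ht : 1 ≤ t)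
    (hS : S.PosSemidef) (hX1S : (X 1 + S).PosDef) (hX : ∀ k ∈ Icc 1 t, (X k).PosSemidef) :
    ((∑ k ∈ Icc 1 t, X k) + (t:ℝ) • S).PosDef := by
  have hsum : (∑ k ∈ Icc 1 t, X k) + (t:ℝ) • S = ∑ k ∈ Icc 1 t, (X k + S) := by
    rw [sum_add_distrib, sum_const, Nat.card_Icc, Nat.add_sub_cancel, ← Nat.cast_smul_eq_nsmul ℝ]
  exact hsum ▸ posDef_sum_of_mem (left_mem_Icc.mpr ht) hX1S fun k hk => (hX k hk).add hS

variable [Fintype ι]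

lemma isStarProjection_sum_vecMulVec [Fintype κ] [DecidableEq κ] {v : κ → ι → ℝ}
    (hv : ∀ j j', v j ⬝ᵥ v j' = if j = j' then 1 else 0) :
    IsStarProjection (∑ j, vecMulVec (v j) (v j)) where
  isIdempotentElem := by
    simp_rw [IsIdempotentElem, Finset.sum_mul_sum, vecMulVec_mul_vecMulVec, hv, ite_smul,
      one_smul, zero_smul, apply_ite (vecMulVec _), vecMulVec_zero, Finset.sum_ite_eq,
      if_pos (mem_univ _)]
  isSelfAdjoint := by
    simp [IsSelfAdjoint, star_sum, star_eq_conjTranspose]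

variable [DecidableEq ι]

lemma PosSemidef.trace_mul_le_trace {X P : Matrix ι ι ℝ} (hX : X.PosSemidef)
    (hP : IsStarProjection P) : (X * P).trace ≤ X.trace := by
  have hQ := hP.one_sub
  have hQH : (1 - P)ᴴ = 1 - P := hQ.isSelfAdjoint
  have h0 := (hX.conjTranspose_mul_mul_same (1 - P)).trace_nonneg
  rw [hQH, trace_mul_cycle, hQ.isIdempotentElem.eq, sub_mul, one_mul, trace_sub,
    trace_mul_comm] at h0
  linarith

lemma PosDef.two_mul_trace_sub_le_trace_inv {Y : Matrix ι ι ℝ} (hY : Y.PosDef) [Fintype κ]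
    (B Q : Matrix ι κ ℝ) :
    2 * (Bᴴ * Q).trace - (Qᴴ * Y * Q).trace ≤ (Bᴴ * Y⁻¹ * B).trace := by
  have hunit : IsUnit Y.det := hY.isUnit.map (detMonoidHom)
  have hYinv : Y⁻¹ᴴ = Y⁻¹ := by rw [conjTranspose_nonsing_inv, hY.isHermitian.eq]
  set R := Y⁻¹ * B - Q
  have h0 := (hY.posSemidef.conjTranspose_mul_mul_same R).trace_nonneg
  have hexp : Rᴴ * Y * R = Bᴴ * Y⁻¹ * B - Bᴴ * Q - (Bᴴ * Q)ᴴ + Qᴴ * Y * Q := by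
    simp only [R, conjTranspose_sub, conjTranspose_mul, conjTranspose_conjTranspose, hYinv,
      Matrix.sub_mul, Matrix.mul_sub, Matrix.mul_assoc, mul_nonsing_inv_cancel_left _ _ hunit,
      nonsing_inv_mul_cancel_left _ _ hunit]
    abel
  rw [hexp, trace_add, trace_sub, trace_sub, trace_conjTranspose, star_trivial] at h0
  linarith

lemma PosDef.two_mul_trace_sub_le_trace_inv_of_isStarProjection {Y P : Matrix ι ι ℝ}
    (hY : Y.PosDef) (hP : IsStarProjection P) (B : Matrix ι ι ℝ) (c : ℝ) :
    2 * c * (Bᴴ * P).trace - c ^ 2 * (Y * P).trace ≤ (Bᴴ * Y⁻¹ * B).trace := by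
  have hPH : Pᴴ = P := hP.isSelfAdjoint
  have hlin : (Bᴴ * c • P).trace = c * (Bᴴ * P).trace := by
    rw [mul_smul_comm, trace_smul, smul_eq_mul]
  have hquad : ((c • P)ᴴ * Y * (c • P)).trace = c ^ 2 * (Y * P).trace := by
    rw [conjTranspose_smul, hPH, star_trivial, smul_mul_assoc, smul_mul_assoc, mul_smul_comm,
      smul_smul, trace_smul, trace_mul_cycle, hP.isIdempotentElem.eq, trace_mul_comm,
      smul_eq_mul, sq]
  have h := hY.two_mul_trace_sub_le_trace_inv B (c • P)
  rw [hlin, hquad] at h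
  linarith

lemma trace_sum_add_smul_mul_le {s : Finset κ} {X : κ → Matrix ι ι ℝ} {S P : Matrix ι ι ℝ}
    (hP : IsStarProjection P) (hSP : S * P = 0) (hX : ∀ k ∈ s, (X k).PosSemidef) (a : ℝ) :
    (((∑ k ∈ s, X k) + a • S) * P).trace ≤ ∑ k ∈ s, (X k).trace := by
  rw [add_mul, smul_mul_assoc, hSP, smul_zero, add_zero, sum_mul, trace_sum]
  exact sum_le_sum fun k hk => (hX k hk).trace_mul_le_trace hP

end Matrix

-- At `T = 0` the junk value `(√0)⁻¹ = 0` makes `T * (√T)⁻¹ ^ 2` equal to `0`, not `1`.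
lemma two_mul_sqrt_mul_le_mul_add {T G C : ℝ} (hT : 0 ≤ T) (hC : 0 ≤ C) :
    2 * √T * G ≤ T * (2 * (√T)⁻¹ * G - (√T)⁻¹ ^ 2 * C) + C := by
  have hTc : T * (√T)⁻¹ = √T := by rw [← div_eq_mul_inv, div_sqrt]
  have hTc2 : T * (√T)⁻¹ ^ 2 ≤ 1 := by
    rw [inv_pow, sq_sqrt hT, ← div_eq_mul_inv]
    exact div_self_le_one _
  linear_combination (-2 * G) * hTc + mul_nonneg (sub_nonneg.2 hTc2) hC

theorem stmt_10_general (n m T : ℕ)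
    (S W Wt : Matrix (Fin n) (Fin n) ℝ)
    (hS : S.PosSemidef)
    (hWt : Wt.PosSemidef) (hWtsq : Wt * Wt = W)
    (nv : Fin m → (Fin n → ℝ))
    (hon : ∀ j j', nv j ⬝ᵥ nv j' = if j = j' then 1 else 0)
    (hker : ∀ j, S *ᵥ nv j = 0)
    (X : ℕ → Matrix (Fin n) (Fin n) ℝ)
    (hX : ∀ t ∈ Finset.Icc 1 T, (X t).PosSemidef)
    (hX1S : (X 1 + S).PosDef) :
    2 * Real.sqrt T * ∑ j, nv j ⬝ᵥ (Wt *ᵥ nv j)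
    ≤ ∑ t ∈ Finset.Icc 1 T,
        ((W * ((∑ k ∈ Finset.Icc 1 t, X k) + (t:ℝ) • S)⁻¹).trace + (X t).trace) := by
  set P := ∑ j, vecMulVec (nv j) (nv j)
  have hP : IsStarProjection P := isStarProjection_sum_vecMulVec hon
  have hSP : S * P = 0 := by simp [P, Finset.mul_sum, mul_vecMulVec, hker]
  have hWtP : (Wtᴴ * P).trace = ∑ j, nv j ⬝ᵥ (Wt *ᵥ nv j) := by
    rw [hWt.1.eq]
    simp [P, Finset.mul_sum, mul_vecMulVec, trace_sum, dotProduct_comm]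
  set G := ∑ j, nv j ⬝ᵥ (Wt *ᵥ nv j)
  set C := ∑ k ∈ Icc 1 T, (X k).trace
  set c := (√T)⁻¹
  have hterm : ∀ t ∈ Icc 1 T,
      2 * c * G - c ^ 2 * C ≤ (W * ((∑ k ∈ Icc 1 t, X k) + (t:ℝ) • S)⁻¹).trace := by
    intro t ht
    obtain ⟨ht1, htT⟩ := mem_Icc.mp ht
    have hXt : ∀ k ∈ Icc 1 t, (X k).PosSemidef :=
      fun k hk => hX k (Icc_subset_Icc le_rfl htT hk)
    have hYP := (trace_sum_add_smul_mul_le hP hSP hXt t).trans <|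
      sum_le_sum_of_subset_of_nonneg (Icc_subset_Icc le_rfl htT)
        fun k hk _ => (hX k hk).trace_nonneg
    have hYpd := posDef_sum_Icc_add_natCast_smul ht1 hS hX1S hXt
    have h := hYpd.two_mul_trace_sub_le_trace_inv_of_isStarProjection hP Wt c
    rw [hWtP, hWt.1.eq, trace_mul_cycle, hWtsq] at h
    nlinarith [mul_le_mul_of_nonneg_left hYP (sq_nonneg c)]
  have hC : 0 ≤ C := sum_nonneg fun k hk => (hX k hk).trace_nonneg
  calc 2 * √T * G ≤ T * (2 * c * G - c ^ 2 * C) + C :=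
        two_mul_sqrt_mul_le_mul_add (Nat.cast_nonneg T) hC
    _ = ∑ t ∈ Icc 1 T, (2 * c * G - c ^ 2 * C + (X t).trace) := by
        rw [sum_add_distrib, sum_const, Nat.card_Icc, Nat.add_sub_cancel, nsmul_eq_mul]
    _ ≤ _ := sum_le_sum fun t ht => add_le_add_left (hterm t ht) _

theorem stmt_10 (n m T : ℕ) (hT : 1 ≤ T)
    (S W Wt : Matrix (Fin n) (Fin n) ℝ)
    (hS : S.PosSemidef) (hSsing : S.det = 0)
    (hW : W.PosSemidef) (hWt : Wt.PosSemidef) (hWtsq : Wt * Wt = W)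
    (nv : Fin m → (Fin n → ℝ))
    (hon : ∀ j j', nv j ⬝ᵥ nv j' = if j = j' then 1 else 0)
    (hker : ∀ j, S *ᵥ nv j = 0)
    (hspan : ∀ v : Fin n → ℝ, S *ᵥ v = 0 → v ∈ Submodule.span ℝ (Set.range nv))
    (X : ℕ → Matrix (Fin n) (Fin n) ℝ)
    (hX : ∀ t ∈ Finset.Icc 1 T, (X t).PosSemidef)
    (hX1S : (X 1 + S).PosDef) :
    2 * Real.sqrt T * ∑ j, nv j ⬝ᵥ (Wt *ᵥ nv j)
    ≤ ∑ t ∈ Finset.Icc 1 T,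
        ((W * ((∑ k ∈ Finset.Icc 1 t, X k) + (t:ℝ) • S)⁻¹).trace + (X t).trace) :=
  stmt_10_general n m T S W Wt hS hWt hWtsq nv hon hker X hX hX1S
end

section
/- Let T ≥ 1, and let S ≻ 0, W ≻ 0 be n×n real symmetric matrices. Set α_T = ∑_{t=1}^T 1/t, β_T = ∑_{t=1}^T 1/t², c_T = 1/(β_T λ_max(S⁻¹WS⁻¹)), and J* = tr(WS⁻¹). Then every feasible sequence X₁,…,X_T (X_t ⪰ 0) satisfies J_T ≥ (2 - c_T)·c_T·α_T·J*, where J_T = ∑_{t=1}^T [tr(W X̄_t⁻¹) + tr(X_t)] with X̄_t = ∑_{k=1}^t X_k + tS. -/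
/-!
For `A ≻ 0`, `W ⪰ 0` and symmetric `Y` one has `tr(W A⁻¹) ≥ 2 tr(W Y) - tr(W Y A Y)`, the
difference being `tr(W (Y - A⁻¹) A (Y - A⁻¹)) ≥ 0`. At step `t` take `A = X̄_t` and
`Y = (a / t) S⁻¹`; bounding `tr(S⁻¹ W S⁻¹ X̄_t)` by `λ_max · ∑ tr X_k` and summing over `t` gives
`J_T ≥ (2a - a²) α_T J* + (1 - a² β_T λ_max) ∑ tr X_t` for every real `a`. With `a = min c_T 1`
the second term is nonnegative and `(2 - a) a ≥ (2 - c_T) c_T`.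
-/

open Matrix BigOperators Finset Real
open scoped MatrixOrder

namespace Matrix
variable {ι : Type*} [Fintype ι] [DecidableEq ι]

section RCLike
open scoped ComplexOrder
variable {𝕜 : Type*} [RCLike 𝕜]

theorem PosSemidef.trace_mul_nonneg {A B : Matrix ι ι 𝕜} (hA : A.PosSemidef)
    (hB : B.PosSemidef) : 0 ≤ (A * B).trace := by
  obtain ⟨R, hR, rfl⟩ : ∃ R : Matrix ι ι 𝕜, Rᴴ = R ∧ A = R * R :=
    ⟨CFC.sqrt A, (CFC.sqrt_nonneg A).posSemidef.isHermitian.eq,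
      (CFC.sqrt_mul_sqrt_self A hA.nonneg).symm⟩
  have h := (hB.mul_mul_conjTranspose_same R).trace_nonneg
  rwa [hR, trace_mul_cycle] at h

theorem IsHermitian.posSemidef_smul_one_sub {M : Matrix ι ι 𝕜} (hM : M.IsHermitian) {r : ℝ}
    (h : ∀ i, hM.eigenvalues i ≤ r) : (r • 1 - M).PosSemidef := by
  rw [← Matrix.le_iff, ← Algebra.algebraMap_eq_smul_one,
    le_algebraMap_iff_spectrum_le hM.isSelfAdjoint]
  intro x hx
  obtain ⟨i, rfl⟩ := hM.spectrum_real_eq_range_eigenvalues ▸ hx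
  exact h i

theorem two_mul_trace_sub_le_trace_mul_inv {A W Y : Matrix ι ι 𝕜} (hA : A.PosDef)
    (hW : W.PosSemidef) (hY : Y.IsHermitian) :
    2 * (W * Y).trace - (W * Y * A * Y).trace ≤ (W * A⁻¹).trace := by
  have hdet : IsUnit A.det := (isUnit_iff_isUnit_det A).mp hA.isUnit
  have hA₁ : A * A⁻¹ = 1 := mul_nonsing_inv A hdet
  have hA₂ : A⁻¹ * A = 1 := nonsing_inv_mul A hdet
  have hB : (Y - A⁻¹)ᴴ = Y - A⁻¹ := (hY.sub hA.inv.isHermitian).eq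
  have hsq : (Y - A⁻¹) * A * (Y - A⁻¹) = Y * A * Y - 2 • Y + A⁻¹ := by
    simp only [sub_mul, mul_sub, Matrix.mul_assoc, hA₁, hA₂, Matrix.mul_one, Matrix.one_mul]
    abel
  have h := hW.trace_mul_nonneg (hB ▸ hA.posSemidef.conjTranspose_mul_mul_same (Y - A⁻¹))
  rw [hsq, mul_add, mul_sub, trace_add, trace_sub, Matrix.mul_smul, trace_smul, nsmul_eq_mul] at h
  simp only [Matrix.mul_assoc] at h ⊢
  push_cast at h
  linear_combination h

end RCLike

theorem trace_mul_inv_add_smul_ge {S W P : Matrix ι ι ℝ} (hS : S.PosDef) (hW : W.PosSemidef)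
    (hP : P.PosSemidef) {t : ℝ} (ht : 0 < t) (a : ℝ) :
    (2 * a - a ^ 2) / t * (W * S⁻¹).trace - (a / t) ^ 2 * (S⁻¹ * W * S⁻¹ * P).trace
      ≤ (W * (P + t • S)⁻¹).trace := by
  have hS₁ : S * S⁻¹ = 1 := mul_nonsing_inv S ((isUnit_iff_isUnit_det S).mp hS.isUnit)
  have h := two_mul_trace_sub_le_trace_mul_inv (PosDef.posSemidef_add hP (hS.smul ht)) hW
    (hS.inv.isHermitian.smul (IsSelfAdjoint.all (a / t)))
  have hquad : W * ((a / t) • S⁻¹) * (P + t • S) * ((a / t) • S⁻¹)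
      = (a / t) ^ 2 • (W * S⁻¹ * P * S⁻¹ + t • (W * S⁻¹)) := by
    simp only [Matrix.mul_smul, Matrix.smul_mul, Matrix.mul_add, Matrix.add_mul, smul_smul,
      Matrix.mul_assoc, hS₁, Matrix.mul_one, smul_add]
    ring_nf
  have hcyc : (W * S⁻¹ * P * S⁻¹).trace = (S⁻¹ * W * S⁻¹ * P).trace := by
    rw [trace_mul_comm, ← Matrix.mul_assoc, ← Matrix.mul_assoc]
  rw [hquad, Matrix.mul_smul, trace_smul, trace_smul, trace_add, trace_smul, hcyc] at h
  simp only [smul_eq_mul] at h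
  refine le_of_eq_of_le ?_ h
  field_simp
  ring

theorem sum_trace_mul_inv_add_smul_ge {S W : Matrix ι ι ℝ} (hS : S.PosDef) (hW : W.PosSemidef)
    {lam : ℝ} (hlam : (lam • 1 - S⁻¹ * W * S⁻¹).PosSemidef) (T : ℕ) (X : ℕ → Matrix ι ι ℝ)
    (hX : ∀ t ∈ Finset.Icc 1 T, (X t).PosSemidef) (a : ℝ) :
    (2 * a - a ^ 2) * (∑ t ∈ Finset.Icc 1 T, (1 : ℝ) / t) * (W * S⁻¹).trace
        + (1 - a ^ 2 * ((∑ t ∈ Finset.Icc 1 T, (1 : ℝ) / t ^ 2) * lam))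
          * ∑ t ∈ Finset.Icc 1 T, (X t).trace
      ≤ ∑ t ∈ Finset.Icc 1 T,
          ((W * ((∑ k ∈ Finset.Icc 1 t, X k) + (t : ℝ) • S)⁻¹).trace + (X t).trace) := by
  set M := S⁻¹ * W * S⁻¹
  set J := (W * S⁻¹).trace
  set L := lam * ∑ t ∈ Finset.Icc 1 T, (X t).trace
  have hM : M.PosSemidef := by
    have h := hW.conjTranspose_mul_mul_same S⁻¹
    rwa [hS.inv.isHermitian.eq] at h
  have hP : ∀ t ≤ T, (∑ k ∈ Finset.Icc 1 t, X k).PosSemidef := fun t ht =>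
    posSemidef_sum _ fun k hk => hX k (Finset.Icc_subset_Icc_right ht hk)
  have hML : ∀ t ≤ T, (M * ∑ k ∈ Finset.Icc 1 t, X k).trace ≤ L := by
    intro t ht
    have hmono : (M * ∑ k ∈ Finset.Icc 1 t, X k).trace
        ≤ (M * ∑ k ∈ Finset.Icc 1 T, X k).trace := by
      simp only [Matrix.mul_sum, trace_sum]
      exact Finset.sum_le_sum_of_subset_of_nonneg (Finset.Icc_subset_Icc_right ht)
        fun k hk _ => hM.trace_mul_nonneg (hX k hk)
    have hlamP := hlam.trace_mul_nonneg (hP T le_rfl)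
    rw [sub_mul, trace_sub, smul_mul, Matrix.one_mul, trace_smul, trace_sum] at hlamP
    simp only [smul_eq_mul] at hlamP
    linarith
  have hstep : ∀ t ∈ Finset.Icc 1 T, (2 * a - a ^ 2) / t * J - (a / t) ^ 2 * L
      ≤ (W * ((∑ k ∈ Finset.Icc 1 t, X k) + (t : ℝ) • S)⁻¹).trace := by
    intro t ht
    obtain ⟨ht₁, htT⟩ := Finset.mem_Icc.1 ht
    refine le_trans ?_ (trace_mul_inv_add_smul_ge hS hW (hP t htT) (Nat.cast_pos.2 ht₁) a)
    gcongr
    exact hML t htT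
  calc _ = ∑ t ∈ Finset.Icc 1 T, ((2 * a - a ^ 2) / t * J - (a / t) ^ 2 * L + (X t).trace) := by
        simp only [Finset.sum_add_distrib, Finset.sum_sub_distrib, div_eq_mul_inv, mul_pow,
          inv_pow, L, ← Finset.sum_mul, ← Finset.mul_sum]
        ring
    _ ≤ _ := Finset.sum_le_sum fun t ht => by gcongr; exact hstep t ht

end Matrix

theorem exists_sq_mul_le_one_and_two_sub_mul_le {c κ : ℝ} (hc : c = 1 / κ) :
    ∃ a : ℝ, a ^ 2 * κ ≤ 1 ∧ (2 - c) * c ≤ (2 - a) * a := by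
  rcases le_or_gt c 1 with h | h
  · refine ⟨c, ?_, le_rfl⟩
    rcases eq_or_ne κ 0 with rfl | hκ
    · simp
    · have : c ^ 2 * κ = c := by rw [hc]; field_simp
      linarith
  · have hκ : κ = 1 / c := by rw [hc, one_div_one_div]
    refine ⟨1, ?_, by nlinarith [sq_nonneg (c - 1)]⟩
    rw [hκ, one_pow, one_mul]
    exact (div_le_one (by linarith)).2 h.le

theorem stmt_11_general (n T : ℕ)
    (S W : Matrix (Fin n) (Fin n) ℝ) (hS : S.PosDef) (hW : W.PosDef)
    (hM : (S⁻¹ * W * S⁻¹).IsHermitian) (lam c : ℝ)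
    (hlam : lam = ⨆ i, hM.eigenvalues i)
    (hc : c = 1 / ((∑ t ∈ Finset.Icc 1 T, (1:ℝ)/(t:ℝ)^2) * lam))
    (X : ℕ → Matrix (Fin n) (Fin n) ℝ)
    (hX : ∀ t ∈ Finset.Icc 1 T, (X t).PosSemidef) :
    (2 - c) * c * (∑ t ∈ Finset.Icc 1 T, (1:ℝ)/(t:ℝ)) * (W * S⁻¹).trace
    ≤ ∑ t ∈ Finset.Icc 1 T,
        ((W * ((∑ k ∈ Finset.Icc 1 t, X k) + (t:ℝ) • S)⁻¹).trace + (X t).trace) := by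
  obtain ⟨a, ha, hca⟩ := exists_sq_mul_le_one_and_two_sub_mul_le hc
  have hlamI : (lam • 1 - S⁻¹ * W * S⁻¹).PosSemidef :=
    hM.posSemidef_smul_one_sub fun i => hlam ▸ le_ciSup (Set.finite_range _).bddAbove i
  have hα : 0 ≤ ∑ t ∈ Finset.Icc 1 T, (1:ℝ)/(t:ℝ) := sum_nonneg fun t _ => by positivity
  have hJ : 0 ≤ (W * S⁻¹).trace := hW.posSemidef.trace_mul_nonneg hS.inv.posSemidef
  have hx : 0 ≤ ∑ t ∈ Finset.Icc 1 T, (X t).trace :=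
    sum_nonneg fun t ht => (hX t ht).trace_nonneg
  refine le_trans ?_ (sum_trace_mul_inv_add_smul_ge hS hW.posSemidef hlamI T X hX a)
  nlinarith [mul_le_mul_of_nonneg_right hca (mul_nonneg hα hJ), mul_nonneg (sub_nonneg.2 ha) hx]

theorem stmt_11 (n T : ℕ) (hn : 1 ≤ n) (hT : 1 ≤ T)
    (S W : Matrix (Fin n) (Fin n) ℝ) (hS : S.PosDef) (hW : W.PosDef)
    (hM : (S⁻¹ * W * S⁻¹).IsHermitian) (lam c : ℝ)
    (hlam : lam = ⨆ i, hM.eigenvalues i)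
    (hc : c = 1 / ((∑ t ∈ Finset.Icc 1 T, (1:ℝ)/(t:ℝ)^2) * lam))
    (X : ℕ → Matrix (Fin n) (Fin n) ℝ)
    (hX : ∀ t ∈ Finset.Icc 1 T, (X t).PosSemidef) :
    (2 - c) * c * (∑ t ∈ Finset.Icc 1 T, (1:ℝ)/(t:ℝ)) * (W * S⁻¹).trace
    ≤ ∑ t ∈ Finset.Icc 1 T,
        ((W * ((∑ k ∈ Finset.Icc 1 t, X k) + (t:ℝ) • S)⁻¹).trace + (X t).trace) :=
  stmt_11_general n T S W hS hW hM lam c hlam hc X hX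
end
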